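/- Let f = (f_n)_{n=0}^{31} be an arbitrary family of functions where f_n maps bit-strings of length n to a single bit, let PP_f be the canonical prefix-preserving function, and let s, a, b ∈ {0,1}^32 and c be a natural number. Then Q(PP_f^c(s XOR a), PP_f^c(s XOR b)) = Q(a, b); i.e., the migration map x ↦ PP_f^c(s XOR x) preserves the longest common prefix length of any two addresses to which it is applied with the same prefix string s and the same key index c. -/

import Mathlib

/-- The canonical prefix-preserving anonymization function: bit `i` of the
output is bit `i` of the input XOR-ed with `f i` applied to the first `i`
bits of the input. -/
def PP (f : (n : Fin 32) → (Fin (n : ℕ) → Bool) → Bool)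
    (a : Fin 32 → Bool) : Fin 32 → Bool :=
  fun i => xor (a i) (f i (fun j => a ⟨j.val, j.isLt.trans i.isLt⟩))
/-- The longest-common-prefix length of two 32-bit strings: the largest
`k ≤ 32` such that `a` and `b` agree on their first `k` bits. -/
def Q (a b : Fin 32 → Bool) : ℕ :=
  Nat.findGreatest (fun k => ∀ i : Fin 32, i.val < k → a i = b i) 32

/-!
Bit `i` of `PP f a` is `a i` masked by a function of the bits before `i`, so two strings that
agree on their first `i` bits get the same mask at `i`; by induction on `i`, `PP f` preserves (and
reflects) agreement on every prefix. The map `x ↦ s XOR x` does too, hence so does every composite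
of them, and `Q` only depends on which prefixes agree.
-/

lemma Q_congr {a b a' b' : Fin 32 → Bool}
    (h : ∀ k, (∀ i : Fin 32, i.val < k → a i = b i) ↔ (∀ i : Fin 32, i.val < k → a' i = b' i)) :
    Q a b = Q a' b' := by
  simp only [Q, h]

section PP

variable (f : (n : Fin 32) → (Fin (n : ℕ) → Bool) → Bool) {a b : Fin 32 → Bool}

lemma PP_apply_eq_iff {i : Fin 32} (h : ∀ j : Fin 32, j < i → a j = b j) :
    PP f a i = PP f b i ↔ a i = b i := by
  have hmask : (fun j : Fin i.val => a ⟨j.val, j.isLt.trans i.isLt⟩) =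
      (fun j : Fin i.val => b ⟨j.val, j.isLt.trans i.isLt⟩) :=
    funext fun j => h _ j.isLt
  simp only [PP, hmask, Bool.xor_left_inj]

lemma PP_agree_below_iff (k : ℕ) :
    (∀ i : Fin 32, i.val < k → PP f a i = PP f b i) ↔ (∀ i : Fin 32, i.val < k → a i = b i) := by
  refine ⟨fun h i => ?_, fun h i hi =>
    (PP_apply_eq_iff f fun j hj => h j (Nat.lt_trans hj hi)).2 (h i hi)⟩
  induction i using WellFoundedLT.induction with
  | _ i ih =>
    intro hi
    exact (PP_apply_eq_iff f fun j hj => ih j hj (Nat.lt_trans hj hi)).1 (h i hi)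

lemma Q_PP (a b : Fin 32 → Bool) : Q (PP f a) (PP f b) = Q a b :=
  Q_congr (PP_agree_below_iff f)

lemma Q_iterate_PP (c : ℕ) (a b : Fin 32 → Bool) :
    Q ((PP f)^[c] a) ((PP f)^[c] b) = Q a b := by
  induction c generalizing a b with
  | zero => rfl
  | succ c ih => rw [Function.iterate_succ_apply, Function.iterate_succ_apply, ih, Q_PP]

end PP

lemma Q_xor_left (s a b : Fin 32 → Bool) :
    Q (fun i => xor (s i) (a i)) (fun i => xor (s i) (b i)) = Q a b :=
  Q_congr fun _ => by simp only [Bool.xor_right_inj]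

/-- The migration map `x ↦ PP_f^[c] (s XOR x)` (same prefix string `s`, same
key index `c`) preserves the longest common prefix length of any two
addresses. -/
theorem migration_preserves_Q (f : (n : Fin 32) → (Fin (n : ℕ) → Bool) → Bool)
    (s a b : Fin 32 → Bool) (c : ℕ) :
    Q ((PP f)^[c] (fun i => xor (s i) (a i)))
        ((PP f)^[c] (fun i => xor (s i) (b i))) = Q a b := by
  rw [Q_iterate_PP, Q_xor_left]
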